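/- arXiv:2601.18655 — 4 statements merged into one kernel-verified Lean document; each statement's English description precedes it below -/
import Mathlib

section
/- For N > 0, the function f(β) = (√(βN) + √(βN+1))² (1-β) N on [0,1] attains its maximum at β* = N/(2N+1). -/
/-!
Write `s = βN` and `u = √s + √(s+1)`. Since `(√(s+1) - √s) u = 1`, we get `2√s = u - 1/u`, so
`u² (N - s) = N(N+1) - (u² - (2N+1))² / 4`. Hence `f ≤ N(N+1)`, with equality exactly when
`u² = 2N+1`, which happens at `s = N²/(2N+1)`, i.e. at `β = N/(2N+1)`.
-/

open Real

-- The difference of the two sides is `((a+b)² - 1)² - (2a(a+b))²`,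
-- and `(a+b)² - 1 - 2a(a+b) = b² - a² - 1`.
theorem four_mul_sq_add_mul_sub_sq_eq {R : Type*} [CommRing R] {a b : R} (N : R)
    (hab : b ^ 2 = a ^ 2 + 1) :
    4 * ((a + b) ^ 2 * (N - a ^ 2)) = 4 * (N * (N + 1)) - ((a + b) ^ 2 - (2 * N + 1)) ^ 2 := by
  linear_combination ((a + b) ^ 2 - 1 + 2 * a * (a + b)) * hab

theorem sq_sqrt_add_sqrt_add_one_mul_eq {s : ℝ} (hs : 0 ≤ s) (N : ℝ) :
    (√s + √(s + 1)) ^ 2 * (N - s) = N * (N + 1) - ((√s + √(s + 1)) ^ 2 - (2 * N + 1)) ^ 2 / 4 := by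
  have key := four_mul_sq_add_mul_sub_sq_eq N (a := √s) (b := √(s + 1))
    (by rw [sq_sqrt hs, sq_sqrt (by linarith)])
  rw [sq_sqrt hs] at key
  linarith

theorem sq_sqrt_add_sqrt_add_one_mul_le {s : ℝ} (hs : 0 ≤ s) (N : ℝ) :
    (√s + √(s + 1)) ^ 2 * (N - s) ≤ N * (N + 1) := by
  rw [sq_sqrt_add_sqrt_add_one_mul_eq hs]
  linarith [sq_nonneg ((√s + √(s + 1)) ^ 2 - (2 * N + 1))]

theorem sq_sqrt_sq_div_add_sqrt_sq_div_add_one {N : ℝ} (hN : 0 ≤ N) :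
    (√(N ^ 2 / (2 * N + 1)) + √(N ^ 2 / (2 * N + 1) + 1)) ^ 2 = 2 * N + 1 := by
  have hpos : 0 < 2 * N + 1 := by linarith
  have hsucc : N ^ 2 / (2 * N + 1) + 1 = (N + 1) ^ 2 / (2 * N + 1) := by
    field_simp
    ring
  rw [hsucc, sqrt_div' _ hpos.le, sqrt_div' _ hpos.le, sqrt_sq hN, sqrt_sq (by linarith),
    ← add_div, div_pow, sq_sqrt hpos.le]
  field_simp
  ring

theorem stmt_0 (N : ℝ) (hN : 0 < N) :
    ∀ β ∈ Set.Icc (0:ℝ) 1,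
      (Real.sqrt (β * N) + Real.sqrt (β * N + 1))^2 * (1 - β) * N ≤
      (Real.sqrt ((N / (2 * N + 1)) * N) + Real.sqrt ((N / (2 * N + 1)) * N + 1))^2 *
        (1 - N / (2 * N + 1)) * N := by
  rintro β ⟨hβ, -⟩
  have hopt : N / (2 * N + 1) * N = N ^ 2 / (2 * N + 1) := by ring
  have hmax : (√(N ^ 2 / (2 * N + 1)) + √(N ^ 2 / (2 * N + 1) + 1)) ^ 2 *
      (N - N ^ 2 / (2 * N + 1)) = N * (N + 1) := by
    rw [sq_sqrt_add_sqrt_add_one_mul_eq (by positivity),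
      sq_sqrt_sq_div_add_sqrt_sq_div_add_one hN.le]
    ring
  calc (√(β * N) + √(β * N + 1)) ^ 2 * (1 - β) * N
      = (√(β * N) + √(β * N + 1)) ^ 2 * (N - β * N) := by ring
    _ ≤ N * (N + 1) := sq_sqrt_add_sqrt_add_one_mul_le (mul_nonneg hβ hN.le) N
    _ = _ := by rw [hopt, ← hmax]; ring
end

section
/- For ε, ζ > 0, the Gamma–Gamma density f(z) = (2(εζ)^{(ε+ζ)/2} / (Γ(ε)Γ(ζ))) · z^{(ε+ζ)/2 - 1} · K_{ε-ζ}(2√(εζ z)) integrates to 1 over (0,∞). -/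
open Real MeasureTheory

/-- Modified Bessel function of the second kind (for `x > 0`),
via its standard integral representation. -/
noncomputable def besselK (ν x : ℝ) : ℝ :=
  ∫ t in Set.Ioi (0:ℝ), Real.exp (-x * Real.cosh t) * Real.cosh (ν * t)

/-!
The substitution `t = √a · eˢ` turns the cosh-integral defining `K_ν(2√a)` into
`½ a^{ν/2} ∫₀^∞ e^{-t - a/t} t^{-ν-1} dt`. Taking `a = εζz`, the total mass becomes a double
integral over `(z, t) ∈ (0, ∞)²` of a nonnegative function. Integrating first in `z` is a Gamma
integral, leaving `Γ(ε) (εζ)^{-ε} t^{ζ-1} e^{-t}`, whose integral in `t` is `Γ(ε) Γ(ζ) (εζ)^{-ε}`.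
-/

open Set

lemma sq_div_four_le_cosh (s : ℝ) : s ^ 2 / 4 ≤ cosh s := by
  have hexp := quadratic_le_exp_of_nonneg (abs_nonneg s)
  rw [← cosh_abs, cosh_eq]
  nlinarith [exp_pos (-|s|), sq_abs s, abs_nonneg s]

lemma integrable_exp_neg_mul_cosh_sub_mul {y : ℝ} (hy : 0 < y) (ν : ℝ) :
    Integrable fun s : ℝ ↦ exp (-y * cosh s - ν * s) := by
  -- `cosh s ≥ s²/4` and completing the square give the Gaussian bound `e^{2ν²/y} e^{-ys²/8}`.
  refine ((integrable_exp_neg_mul_sq (by positivity : 0 < y / 8)).const_mul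
    (exp (2 * ν ^ 2 / y))).mono' (by fun_prop) (.of_forall fun s ↦ ?_)
  rw [norm_of_nonneg (exp_pos _).le, ← exp_add, exp_le_exp, ← mul_le_mul_iff_right₀ hy]
  have hcosh := mul_le_mul_of_nonneg_left (sq_div_four_le_cosh s) (mul_pos hy hy).le
  have hbound : y * (2 * ν ^ 2 / y + -(y / 8) * s ^ 2) = 2 * ν ^ 2 - y ^ 2 / 8 * s ^ 2 := by
    field_simp; ring
  rw [hbound]
  nlinarith [sq_nonneg (y * s + 4 * ν)]

lemma besselK_eq_half_integral {y : ℝ} (hy : 0 < y) (ν : ℝ) :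
    besselK ν y = (∫ s, exp (-y * cosh s - ν * s)) / 2 := by
  have h_even : ∫ s, exp (-y * cosh s) * cosh (ν * s) = 2 * besselK ν y := by
    rw [besselK, ← integral_comp_abs]
    congr 1 with s
    rcases abs_cases s with ⟨h, -⟩ | ⟨h, -⟩ <;> simp [h, cosh_neg]
  have h_split : ∀ s, exp (-y * cosh s) * cosh (ν * s)
      = (exp (-y * cosh s - ν * s) + exp (-y * cosh (-s) - ν * -s)) / 2 := by
    intro s
    rw [cosh_neg, cosh_eq (ν * s), mul_neg, sub_neg_eq_add, sub_eq_add_neg, exp_add, exp_add]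
    ring
  have hint := integrable_exp_neg_mul_cosh_sub_mul hy ν
  simp_rw [h_split] at h_even
  rw [integral_div, integral_add hint hint.comp_neg,
    integral_neg_eq_self (fun s ↦ exp (-y * cosh s - ν * s))] at h_even
  linarith

lemma integral_Ioi_eq_integral_mul_exp {E : Type*} [NormedAddCommGroup E] [NormedSpace ℝ E]
    {b : ℝ} (hb : 0 < b) (g : ℝ → E) :
    ∫ t in Ioi 0, g t = ∫ x, (b * exp x) • g (b * exp x) := by
  have himage : (fun x ↦ b * exp x) '' univ = Ioi 0 := by
    ext t
    simp only [image_univ, mem_range, mem_Ioi]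
    refine ⟨fun ⟨x, hx⟩ ↦ hx ▸ by positivity, fun ht ↦ ⟨log (t / b), ?_⟩⟩
    rw [exp_log (by positivity)]
    field_simp
  have := integral_image_eq_integral_abs_deriv_smul MeasurableSet.univ
    (fun x _ ↦ ((hasDerivAt_exp x).const_mul b).hasDerivWithinAt)
    (fun x _ x' _ h ↦ exp_injective (mul_left_cancel₀ hb.ne' h)) g
  rw [himage, Measure.restrict_univ] at this
  simpa [abs_of_pos (mul_pos hb (exp_pos _))] using this

lemma besselK_two_sqrt_eq_integral {a : ℝ} (ha : 0 < a) (ν : ℝ) :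
    besselK ν (2 * √a) = a ^ (ν / 2) / 2 * ∫ t in Ioi 0, exp (-t - a / t) * t ^ (-ν - 1) := by
  have hb : 0 < √a := sqrt_pos.2 ha
  have hpt : ∀ x, (√a * exp x) • (exp (-(√a * exp x) - a / (√a * exp x)) * (√a * exp x) ^ (-ν - 1))
      = a ^ (-ν / 2) * exp (-(2 * √a) * cosh x - ν * x) := by
    intro x
    have hdiv : a / (√a * exp x) = √a * exp (-x) := by
      rw [exp_neg]; field_simp; rw [sq_sqrt ha.le]
    have hpow : √a * exp x * (√a * exp x) ^ (-ν - 1) = a ^ (-ν / 2) * exp (-ν * x) := by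
      rw [rpow_sub_one (by positivity), mul_div_cancel₀ _ (by positivity),
        mul_rpow hb.le (exp_pos x).le, sqrt_eq_rpow, ← rpow_mul ha.le, ← exp_mul]
      ring_nf
    rw [smul_eq_mul, hdiv, cosh_eq, ← mul_assoc, mul_comm _ (exp _), mul_assoc, hpow, ← mul_assoc,
      mul_comm _ (a ^ _), mul_assoc, ← exp_add]
    ring_nf
  simp_rw [integral_Ioi_eq_integral_mul_exp hb, hpt]
  rw [integral_const_mul, besselK_eq_half_integral (by positivity), ← mul_assoc,
    div_mul_eq_mul_div, ← rpow_add ha, neg_div, add_neg_cancel, rpow_zero, one_div_mul_eq_div]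

lemma integral_rpow_mul_exp_neg_sub_div {c ε : ℝ} (hc : 0 < c) (hε : 0 < ε) (ζ : ℝ) {t : ℝ}
    (ht : 0 < t) :
    ∫ z in Ioi 0, z ^ (ε - 1) * (exp (-t - c * z / t) * t ^ (ζ - ε - 1))
      = Gamma ε / c ^ ε * (exp (-t) * t ^ (ζ - 1)) := by
  have hpt : ∀ z, z ^ (ε - 1) * (exp (-t - c * z / t) * t ^ (ζ - ε - 1))
      = exp (-t) * t ^ (ζ - ε - 1) * (z ^ (ε - 1) * exp (-(c / t * z))) := by
    intro z
    rw [show -t - c * z / t = -t + -(c / t * z) by ring, exp_add]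
    ring
  simp_rw [hpt]
  rw [integral_const_mul, integral_rpow_mul_exp_neg_mul_Ioi hε (by positivity), one_div_div,
    div_rpow ht.le hc.le]
  have ht_pow : t ^ (ζ - ε - 1) * t ^ ε = t ^ (ζ - 1) := by
    rw [← rpow_add ht]; ring_nf
  rw [← ht_pow]
  ring

lemma integrableOn_rpow_mul_exp_neg_sub_div {c ε : ℝ} (hc : 0 < c) (hε : 0 < ε) (ζ : ℝ) {t : ℝ}
    (ht : 0 < t) :
    IntegrableOn (fun z ↦ z ^ (ε - 1) * (exp (-t - c * z / t) * t ^ (ζ - ε - 1))) (Ioi 0) := by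
  have hgamma := (integrableOn_rpow_mul_exp_neg_mul_rpow (by linarith : -1 < ε - 1) one_pos
    (by positivity : 0 < c / t)).mul_const (exp (-t) * t ^ (ζ - ε - 1))
  refine IntegrableOn.congr_fun hgamma (fun z _ ↦ ?_) measurableSet_Ioi
  rw [rpow_one, show -t - c * z / t = -(c / t) * z + -t by ring, exp_add]
  ring

lemma integral_rpow_mul_integral_exp_neg_sub_div {c ε ζ : ℝ} (hc : 0 < c) (hε : 0 < ε)
    (hζ : 0 < ζ) :
    ∫ z in Ioi 0, z ^ (ε - 1) * ∫ t in Ioi 0, exp (-t - c * z / t) * t ^ (ζ - ε - 1)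
      = Gamma ε * Gamma ζ / c ^ ε := by
  set F : ℝ → ℝ → ℝ := fun z t ↦ z ^ (ε - 1) * (exp (-t - c * z / t) * t ^ (ζ - ε - 1))
  have hF_int : Integrable (Function.uncurry F)
      ((volume.restrict (Ioi 0)).prod (volume.restrict (Ioi 0))) := by
    refine (integrable_prod_iff' (by fun_prop)).2 ⟨?_, ?_⟩
    · exact (ae_restrict_iff' measurableSet_Ioi).2
        (.of_forall fun t ht ↦ integrableOn_rpow_mul_exp_neg_sub_div hc hε ζ ht)
    · refine ((GammaIntegral_convergent hζ).const_mul (Gamma ε / c ^ ε)).congr ?_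
      refine (ae_restrict_iff' measurableSet_Ioi).2 (.of_forall fun t ht ↦ ?_)
      dsimp only
      rw [← integral_rpow_mul_exp_neg_sub_div hc hε ζ ht]
      refine setIntegral_congr_fun measurableSet_Ioi fun z hz ↦ ?_
      have hz : 0 < z := hz
      have ht : 0 < t := ht
      simp only [Function.uncurry_apply_pair, F]
      rw [norm_of_nonneg (by positivity)]
  calc ∫ z in Ioi 0, z ^ (ε - 1) * ∫ t in Ioi 0, exp (-t - c * z / t) * t ^ (ζ - ε - 1)
      = ∫ z in Ioi 0, ∫ t in Ioi 0, F z t := by simp_rw [F, integral_const_mul]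
    _ = ∫ t in Ioi 0, ∫ z in Ioi 0, F z t := integral_integral_swap hF_int
    _ = ∫ t in Ioi 0, Gamma ε / c ^ ε * (exp (-t) * t ^ (ζ - 1)) :=
        setIntegral_congr_fun measurableSet_Ioi fun t ht ↦
          integral_rpow_mul_exp_neg_sub_div hc hε ζ ht
    _ = Gamma ε * Gamma ζ / c ^ ε := by
        rw [integral_const_mul, ← Gamma_eq_integral hζ]; ring

theorem stmt_11 (ε ζ : ℝ) (hε : 0 < ε) (hζ : 0 < ζ) :
    ∫ z in Set.Ioi (0:ℝ),
      (2 * (ε * ζ) ^ ((ε + ζ) / 2) / (Real.Gamma ε * Real.Gamma ζ)) *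
        z ^ ((ε + ζ) / 2 - 1) * besselK (ε - ζ) (2 * Real.sqrt (ε * ζ * z)) = 1 := by
  have hc : 0 < ε * ζ := mul_pos hε hζ
  have h_integrand : ∀ z ∈ Ioi (0 : ℝ),
      2 * (ε * ζ) ^ ((ε + ζ) / 2) / (Gamma ε * Gamma ζ) * z ^ ((ε + ζ) / 2 - 1)
          * besselK (ε - ζ) (2 * √(ε * ζ * z))
        = (ε * ζ) ^ ε / (Gamma ε * Gamma ζ)
          * (z ^ (ε - 1) * ∫ t in Ioi 0, exp (-t - ε * ζ * z / t) * t ^ (ζ - ε - 1)) := by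
    intro z hz
    have hz : 0 < z := hz
    have hc_pow : (ε * ζ) ^ ((ε + ζ) / 2) * (ε * ζ) ^ ((ε - ζ) / 2) = (ε * ζ) ^ ε := by
      rw [← rpow_add hc]; ring_nf
    have hz_pow : z ^ ((ε + ζ) / 2 - 1) * z ^ ((ε - ζ) / 2) = z ^ (ε - 1) := by
      rw [← rpow_add hz]; ring_nf
    rw [besselK_two_sqrt_eq_integral (by positivity), neg_sub, mul_rpow hc.le hz.le, ← hc_pow,
      ← hz_pow]
    ring
  rw [setIntegral_congr_fun measurableSet_Ioi h_integrand, integral_const_mul,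
    integral_rpow_mul_integral_exp_neg_sub_div hc hε hζ]
  have hΓε := Gamma_pos_of_pos hε
  have hΓζ := Gamma_pos_of_pos hζ
  field_simp
end

section
/- Craig's formula: for x ≥ 0, Q(√x) = (1/π)∫₀^{π/2} exp(−x/(2 sin²ϑ)) dϑ, where Q(t) = (1/√(2π))∫ₜ^∞ e^{−u²/2} du is the Gaussian tail function. -/
/-!
Write `a = √x`. Both sides of Craig's formula, as functions of `a ≥ 0`, are continuous, tend to
`0` as `a → ∞`, and have derivative `-e^{-a²/2}/√(2π)` for `a > 0`. For Craig's integral this is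
differentiation under the integral sign followed by the substitution `u = a cot ϑ`, which turns
`∫₀^{π/2} a/sin²ϑ · e^{-a²/(2 sin²ϑ)} dϑ` into `e^{-a²/2} ∫₀^∞ e^{-u²/2} du`.
The fundamental theorem of calculus on `(a, ∞)` then identifies the two sides.
-/

open Real MeasureTheory Set Filter Topology

lemma mul_exp_neg_le_one (y : ℝ) : y * exp (-y) ≤ 1 := by
  rw [exp_neg, ← div_eq_mul_inv, div_le_one (exp_pos y)]
  linarith [add_one_le_exp y]

lemma sin_pos_of_mem_Ioc_zero_pi_div_two {θ : ℝ} (hθ : θ ∈ Ioc 0 (π / 2)) : 0 < sin θ :=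
  sin_pos_of_pos_of_lt_pi hθ.1 (by linarith [hθ.2, pi_pos])

lemma integrable_exp_neg_sq_div_two : Integrable fun u : ℝ => exp (-u ^ 2 / 2) := by
  simpa [neg_div, div_eq_inv_mul] using integrable_exp_neg_mul_sq (b := 1 / 2) (by norm_num)

lemma integral_Ioi_exp_neg_sq_div_two : ∫ u in Ioi (0 : ℝ), exp (-u ^ 2 / 2) = √(π / 2) := by
  convert integral_gaussian_Ioi (1 / 2) using 1
  · congr with u; ring_nf
  · rw [show π / (1 / 2) = (π / 2) * 2 ^ 2 by ring, sqrt_mul (by positivity), sqrt_sq two_pos.le]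
    ring

lemma hasDerivAt_exp_neg_sq_div (s x : ℝ) :
    HasDerivAt (fun x => exp (-x ^ 2 / (2 * s ^ 2)))
      (-(x / s ^ 2 * exp (-x ^ 2 / (2 * s ^ 2)))) x := by
  have h := ((hasDerivAt_pow 2 x).div_const (-(2 * s ^ 2))).exp
  simp only [div_neg, ← neg_div] at h
  convert h using 1
  ring

lemma div_sq_mul_exp_neg_sq_div_le (s : ℝ) {x : ℝ} (hx : 0 < x) :
    x / s ^ 2 * exp (-x ^ 2 / (2 * s ^ 2)) ≤ 2 / x := by
  have h := mul_exp_neg_le_one (x ^ 2 / (2 * s ^ 2))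
  calc x / s ^ 2 * exp (-x ^ 2 / (2 * s ^ 2))
      = 2 / x * (x ^ 2 / (2 * s ^ 2) * exp (-(x ^ 2 / (2 * s ^ 2)))) := by
        rw [neg_div]; field_simp
    _ ≤ 2 / x := mul_le_of_le_one_right (by positivity) h

section CotangentSubstitution

variable {a : ℝ}

lemma hasDerivAt_const_mul_cos_div_sin {θ : ℝ} (hθ : sin θ ≠ 0) :
    HasDerivAt (fun t => a * (cos t / sin t)) (-(a / sin θ ^ 2)) θ := by
  refine (((hasDerivAt_cos θ).div (hasDerivAt_sin θ) hθ).const_mul a).congr_deriv ?_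
  field_simp
  linear_combination (-a) * sin_sq_add_cos_sq θ

lemma strictAntiOn_const_mul_cos_div_sin (ha : 0 < a) :
    StrictAntiOn (fun t => a * (cos t / sin t)) (Ioo 0 (π / 2)) := by
  have hsin : ∀ θ ∈ Ioo 0 (π / 2), 0 < sin θ := fun θ hθ =>
    sin_pos_of_mem_Ioc_zero_pi_div_two (Ioo_subset_Ioc_self hθ)
  have hderiv := fun θ hθ => hasDerivAt_const_mul_cos_div_sin (a := a) (hsin θ hθ).ne'
  refine strictAntiOn_of_hasDerivWithinAt_neg (f' := fun θ => -(a / sin θ ^ 2)) (convex_Ioo _ _)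
    (fun θ hθ => (hderiv θ hθ).continuousAt.continuousWithinAt) ?_ ?_ <;> rw [interior_Ioo]
  · exact fun θ hθ => (hderiv θ hθ).hasDerivWithinAt
  · intro θ hθ
    have := hsin θ hθ
    exact neg_neg_of_pos (by positivity)

lemma image_const_mul_cos_div_sin (ha : 0 < a) :
    (fun t => a * (cos t / sin t)) '' Ioo 0 (π / 2) = Ioi 0 := by
  refine (image_subset_iff.2 fun θ hθ => ?_).antisymm fun u (hu : 0 < u) => ?_
  · have := cos_pos_of_mem_Ioo ⟨by linarith [hθ.1, pi_pos], hθ.2⟩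
    have := sin_pos_of_mem_Ioc_zero_pi_div_two (Ioo_subset_Ioc_self hθ)
    show 0 < a * (cos θ / sin θ)
    positivity
  · -- the inverse of `θ ↦ a cot θ` is `u ↦ arctan (a / u)`
    refine ⟨arctan (a / u), ⟨?_, arctan_lt_pi_div_two _⟩, ?_⟩
    · simpa [arctan_zero] using arctan_strictMono (show 0 < a / u by positivity)
    · have : √(1 + (a / u) ^ 2) ≠ 0 := by positivity
      simp only [cos_arctan, sin_arctan]
      field_simp

lemma integral_div_sin_sq_mul_exp_neg (ha : 0 < a) :
    ∫ θ in 0..π / 2, a / sin θ ^ 2 * exp (-a ^ 2 / (2 * sin θ ^ 2)) =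
      √(π / 2) * exp (-a ^ 2 / 2) := by
  have hsin : ∀ θ ∈ Ioo 0 (π / 2), 0 < sin θ := fun θ hθ =>
    sin_pos_of_mem_Ioc_zero_pi_div_two (Ioo_subset_Ioc_self hθ)
  have h := integral_image_eq_integral_abs_deriv_smul measurableSet_Ioo
    (fun θ hθ => (hasDerivAt_const_mul_cos_div_sin (hsin θ hθ).ne').hasDerivWithinAt)
    (strictAntiOn_const_mul_cos_div_sin ha).injOn (fun u => exp (-u ^ 2 / 2))
  rw [image_const_mul_cos_div_sin ha, integral_Ioi_exp_neg_sq_div_two] at h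
  -- `1 + cot² = 1 / sin²` splits the exponent
  have hexp : ∀ θ ∈ Ioo 0 (π / 2),
      |-(a / sin θ ^ 2)| • exp (-(a * (cos θ / sin θ)) ^ 2 / 2) =
        exp (a ^ 2 / 2) * (a / sin θ ^ 2 * exp (-a ^ 2 / (2 * sin θ ^ 2))) := by
    intro θ hθ
    have := hsin θ hθ
    have hsum : -(a * (cos θ / sin θ)) ^ 2 / 2 = a ^ 2 / 2 + -a ^ 2 / (2 * sin θ ^ 2) := by
      field_simp
      linear_combination (-1) * cos_sq' θ
    rw [smul_eq_mul, abs_neg, abs_of_pos (by positivity), hsum, exp_add]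
    ring
  rw [setIntegral_congr_fun measurableSet_Ioo hexp, integral_const_mul] at h
  rw [intervalIntegral.integral_of_le (by positivity), integral_Ioc_eq_integral_Ioo,
    h, neg_div, exp_neg, mul_comm, inv_mul_cancel_left₀ (exp_pos _).ne']

end CotangentSubstitution

noncomputable def craigIntegral (a : ℝ) : ℝ :=
  ∫ θ in 0..π / 2, exp (-a ^ 2 / (2 * sin θ ^ 2))

lemma aestronglyMeasurable_exp_neg_sq_div_sin_sq (a : ℝ) (μ : Measure ℝ) :
    AEStronglyMeasurable (fun θ => exp (-a ^ 2 / (2 * sin θ ^ 2))) μ :=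
  Measurable.aestronglyMeasurable (by fun_prop)

lemma norm_exp_neg_sq_div_le_one (a s : ℝ) : ‖exp (-a ^ 2 / (2 * s ^ 2))‖ ≤ 1 := by
  rw [norm_of_nonneg (exp_pos _).le]
  exact exp_le_one_iff.2 (by rw [neg_div]; exact neg_nonpos.2 (by positivity))

lemma continuous_craigIntegral : Continuous craigIntegral :=
  intervalIntegral.continuous_of_dominated_interval (bound := fun _ => 1)
    (fun a => aestronglyMeasurable_exp_neg_sq_div_sin_sq a _)
    (fun a => ae_of_all _ fun θ _ => norm_exp_neg_sq_div_le_one a (sin θ))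
    intervalIntegrable_const (ae_of_all _ fun θ _ => by fun_prop)

lemma tendsto_craigIntegral_atTop : Tendsto craigIntegral atTop (𝓝 0) := by
  have h := intervalIntegral.tendsto_integral_filter_of_dominated_convergence
    (F := fun a θ => exp (-a ^ 2 / (2 * sin θ ^ 2))) (f := fun _ => 0) (μ := volume)
    (a := 0) (b := π / 2) (l := atTop) (fun _ => 1)
    (Eventually.of_forall fun a => aestronglyMeasurable_exp_neg_sq_div_sin_sq a _)
    (Eventually.of_forall fun a => ae_of_all _ fun θ _ => norm_exp_neg_sq_div_le_one a (sin θ))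
    intervalIntegrable_const ?_
  · rw [intervalIntegral.integral_zero] at h
    exact h
  refine ae_of_all _ fun θ hθ => ?_
  rw [uIoc_of_le (by positivity)] at hθ
  have hs : 0 < 2 * sin θ ^ 2 := by have := sin_pos_of_mem_Ioc_zero_pi_div_two hθ; positivity
  simp_rw [neg_div, div_eq_mul_inv _ (2 * sin θ ^ 2)]
  exact tendsto_exp_atBot.comp (tendsto_neg_atTop_atBot.comp
    ((tendsto_pow_atTop two_ne_zero).atTop_mul_const (inv_pos.2 hs)))

lemma hasDerivAt_craigIntegral {a : ℝ} (ha : 0 < a) :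
    HasDerivAt craigIntegral (-(√(π / 2) * exp (-a ^ 2 / 2))) a := by
  have h := intervalIntegral.hasDerivAt_integral_of_dominated_loc_of_deriv_le
    (F' := fun x θ => -(x / sin θ ^ 2 * exp (-x ^ 2 / (2 * sin θ ^ 2))))
    (μ := volume) (a := 0) (b := π / 2) (bound := fun _ => 4 / a) (Ioi_mem_nhds (half_lt_self ha))
    (Eventually.of_forall fun x => aestronglyMeasurable_exp_neg_sq_div_sin_sq x _)
    (intervalIntegrable_const.mono_fun' (aestronglyMeasurable_exp_neg_sq_div_sin_sq a _)
      (ae_of_all _ fun θ => norm_exp_neg_sq_div_le_one a (sin θ))) ?_ ?_ intervalIntegrable_const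
    (ae_of_all _ fun θ _ x _ => hasDerivAt_exp_neg_sq_div (sin θ) x)
  · rw [intervalIntegral.integral_neg, integral_div_sin_sq_mul_exp_neg ha] at h
    exact h.2
  · fun_prop
  · refine ae_of_all _ fun θ _ x (hx : a / 2 < x) => ?_
    have hx0 : 0 < x := by linarith
    rw [norm_neg, norm_of_nonneg (by positivity)]
    calc _ ≤ 2 / x := div_sq_mul_exp_neg_sq_div_le (sin θ) hx0
      _ ≤ 4 / a := by rw [div_le_div_iff₀ hx0 ha]; linarith

theorem sqrt_pi_div_two_mul_integral_Ioi_exp_neg_sq_div_two {a : ℝ} (ha : 0 ≤ a) :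
    √(π / 2) * ∫ u in Ioi a, exp (-u ^ 2 / 2) = craigIntegral a := by
  rw [← integral_const_mul]
  have h := integral_Ioi_of_hasDerivAt_of_tendsto (m := 0)
    (f := -craigIntegral) (f' := fun u => √(π / 2) * exp (-u ^ 2 / 2))
    continuous_craigIntegral.neg.continuousWithinAt
    (fun u hu => by simpa using (hasDerivAt_craigIntegral (ha.trans_lt hu)).neg)
    (integrable_exp_neg_sq_div_two.const_mul _).integrableOn
    (by rw [← neg_zero]; exact tendsto_craigIntegral_atTop.neg)
  simpa using h

theorem stmt_16 (x : ℝ) (hx : 0 ≤ x) :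
    (1 / Real.sqrt (2 * π)) * (∫ u in Set.Ioi (Real.sqrt x), Real.exp (-u^2 / 2)) =
    (1 / π) * ∫ ϑ in (0:ℝ)..(π / 2), Real.exp (-x / (2 * Real.sin ϑ ^ 2)) := by
  have hπ : √(2 * π) * √(π / 2) = π := by
    rw [← sqrt_mul (by positivity), show 2 * π * (π / 2) = π ^ 2 by ring, sqrt_sq pi_pos.le]
  have h := sqrt_pi_div_two_mul_integral_Ioi_exp_neg_sq_div_two (sqrt_nonneg x)
  rw [craigIntegral, sq_sqrt hx] at h
  rw [← h, ← mul_assoc]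
  congr 1
  field_simp
  linarith
end

section
/- Fix g > 0 and C₁ > 0, and define P(N) = C₁((√(βN)+√(βN+1))²(1-β)N)^{-2g} for a fixed β ∈ (0,1). Then −lim_{N→∞} log P(N)/log N = 4g, whereas for β = 0 (so P(N) = C₁ N^{-2g}) the limit equals 2g. -/
/-! If `P(N) = C₁ f(N)^{-2g}` with `f(N)` of exact polynomial order `N^k`, then
`log P(N) = log C₁ - 2g k log N + O(1)`, so the diversity order is `2gk`. With squeezing,
`(√(βN) + √(βN+1))² (1-β) N ~ 4β(1-β) N²` has order `k = 2`; without it `f(N) = N` has order `1`. -/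

open Real Filter Topology

theorem tendsto_log_div_log_of_tendsto_div_rpow {f : ℝ → ℝ} {k L : ℝ} (hL : 0 < L)
    (hf : Tendsto (fun N => f N / N ^ k) atTop (𝓝 L)) :
    Tendsto (fun N => log (f N) / log N) atTop (𝓝 k) := by
  have hlog : Tendsto (fun N => log (f N / N ^ k) / log N) atTop (𝓝 0) :=
    ((continuousAt_log hL.ne').tendsto.comp hf).div_atTop tendsto_log_atTop
  have hsum := hlog.add_const k
  rw [zero_add] at hsum
  refine hsum.congr' ?_
  filter_upwards [hf.eventually (lt_mem_nhds hL), eventually_gt_atTop 1] with N hfN hN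
  have hNk : 0 < N ^ k := rpow_pos_of_pos (by linarith) k
  have hfpos : 0 < f N := by simpa [div_pos_iff_of_pos_right hNk] using hfN
  have hlogN : log N ≠ 0 := (log_pos hN).ne'
  rw [log_div hfpos.ne' hNk.ne', log_rpow (by linarith)]
  field_simp
  ring

theorem tendsto_neg_log_const_mul_rpow_div_log {f : ℝ → ℝ} {C a k : ℝ} (hC : 0 < C)
    (hf_pos : ∀ᶠ N in atTop, 0 < f N)
    (hf : Tendsto (fun N => log (f N) / log N) atTop (𝓝 k)) :
    Tendsto (fun N => -(log (C * f N ^ (-a)) / log N)) atTop (𝓝 (a * k)) := by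
  have hconst : Tendsto (fun N => log C / log N) atTop (𝓝 0) :=
    tendsto_const_nhds.div_atTop tendsto_log_atTop
  have hlim := (hf.const_mul a).sub hconst
  rw [sub_zero] at hlim
  refine hlim.congr' ?_
  filter_upwards [hf_pos] with N hfN
  rw [log_mul hC.ne' (rpow_pos_of_pos hfN _).ne', log_rpow hfN]
  ring

theorem tendsto_sq_add_sqrt_div {β : ℝ} (hβ : 0 ≤ β) :
    Tendsto (fun N => (√(β * N) + √(β * N + 1)) ^ 2 / N) atTop (𝓝 (4 * β)) := by
  have hinner : Tendsto (fun N : ℝ => √(β + N⁻¹)) atTop (𝓝 √β) := by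
    have := (tendsto_const_nhds (x := β)).add tendsto_inv_atTop_zero
    rw [add_zero] at this
    exact (continuous_sqrt.tendsto β).comp this
  have hlim := ((tendsto_const_nhds (x := √β)).add hinner).pow 2
  have h4 : (√β + √β) ^ 2 = 4 * β := by linear_combination 4 * sq_sqrt hβ
  rw [h4] at hlim
  refine hlim.congr' ?_
  filter_upwards [eventually_gt_atTop 0] with N hN
  have hsqrt₁ : √(β * N) = √β * √N := sqrt_mul hβ N
  have hsqrt₂ : √(β * N + 1) = √(β + N⁻¹) * √N := by
    rw [← sqrt_mul (by positivity), add_mul, inv_mul_cancel₀ hN.ne']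
  rw [hsqrt₁, hsqrt₂, ← add_mul, mul_pow, sq_sqrt hN.le, mul_div_cancel_right₀ _ hN.ne']

theorem stmt_17_general (g C₁ β : ℝ) (hC : 0 < C₁) (hβ : β ∈ Set.Ioo (0:ℝ) 1) :
    Tendsto (fun N : ℝ =>
        -(Real.log (C₁ * ((Real.sqrt (β * N) + Real.sqrt (β * N + 1))^2 * (1 - β) * N)
            ^ (-(2 * g))) / Real.log N)) atTop (nhds (4 * g)) ∧
    Tendsto (fun N : ℝ =>
        -(Real.log (C₁ * N ^ (-(2 * g))) / Real.log N)) atTop (nhds (2 * g)) := by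
  obtain ⟨hβ0, hβ1⟩ := hβ
  constructor
  · have hratio : Tendsto (fun N : ℝ => (√(β * N) + √(β * N + 1)) ^ 2 * (1 - β) * N / N ^ (2 : ℝ))
        atTop (𝓝 (4 * β * (1 - β))) := by
      refine ((tendsto_sq_add_sqrt_div hβ0.le).mul_const (1 - β)).congr' ?_
      filter_upwards [eventually_gt_atTop 0] with N hN
      rw [rpow_two]
      field_simp
    have hpos : 0 < 4 * β * (1 - β) := by nlinarith
    have hf_pos : ∀ᶠ N : ℝ in atTop, 0 < (√(β * N) + √(β * N + 1)) ^ 2 * (1 - β) * N := by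
      filter_upwards [eventually_gt_atTop 0] with N hN
      have : 0 < √(β * N + 1) := sqrt_pos.2 (by positivity)
      have : 0 < 1 - β := by linarith
      positivity
    have h := tendsto_neg_log_const_mul_rpow_div_log (a := 2 * g) hC hf_pos
      (tendsto_log_div_log_of_tendsto_div_rpow hpos hratio)
    rwa [show 2 * g * 2 = 4 * g by ring] at h
  · have hid : Tendsto (fun N : ℝ => log N / log N) atTop (𝓝 1) :=
      tendsto_const_nhds.congr' <| by
        filter_upwards [eventually_gt_atTop 1] with N hN
        exact (div_self (log_pos hN).ne').symm
    simpa using tendsto_neg_log_const_mul_rpow_div_log (a := 2 * g) hC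
      (eventually_gt_atTop 0) hid

theorem stmt_17 (g C₁ β : ℝ) (hg : 0 < g) (hC : 0 < C₁) (hβ : β ∈ Set.Ioo (0:ℝ) 1) :
    Tendsto (fun N : ℝ =>
        -(Real.log (C₁ * ((Real.sqrt (β * N) + Real.sqrt (β * N + 1))^2 * (1 - β) * N)
            ^ (-(2 * g))) / Real.log N)) atTop (nhds (4 * g)) ∧
    Tendsto (fun N : ℝ =>
        -(Real.log (C₁ * N ^ (-(2 * g))) / Real.log N)) atTop (nhds (2 * g)) :=
  stmt_17_general g C₁ β hC hβ
end
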